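/- There exists a compact set K ⊆ [0,1] of positive Lebesgue measure such that the set E = {x ∈ ℝ⁵ : x₂ ≥ 0, x₄ ≥ 0, and ∃ t ∈ K, (x₅ − t)² ≤ 2·x₂³·x₄} in 𝔽₂₃ satisfies: (i) E is X₁-invariant and forward X₂-monotone, i.e. for every x ∈ E, every a ∈ ℝ and every s ≥ 0, x∗(a,0,0,0,0) ∈ E and x∗(0,s,0,0,0) ∈ E; and (ii) for all p₁, p₃ ∈ ℝ and all p₄ > 0, the one-dimensional slice function x₅ ↦ inf{x₂ ∈ ℝ : (p₁, x₂, p₃, p₄, x₅) ∈ E} does not have locally bounded variation on ℝ. (In particular, E is a set with constant horizontal normal which is not a Caccioppoli set in the Euclidean sense.) -/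

import Mathlib

open MeasureTheory Set

/-- The group operation of the free Carnot group `𝔽₂₃` of rank 2 and step 3, in
exponential coordinates of the second kind on `ℝ⁵`. -/
noncomputable def F23mul (x y : Fin 5 → ℝ) : Fin 5 → ℝ :=
  ![x 0 + y 0,
    x 1 + y 1,
    x 2 + y 2 - x 0 * y 1,
    x 3 + y 3 - x 0 * y 2 + x 0 ^ 2 * y 1 / 2,
    x 4 + y 4 + x 0 * x 1 * y 1 + x 0 * y 1 ^ 2 / 2 - x 1 * y 2]

/-- The union, over `t ∈ K`, of the translates by `t·e₅` of the cone
`𝒞 = {x : x₂ ≥ 0, x₄ ≥ 0, x₅² ≤ 2x₂³x₄}` (coordinates indexed from `0`). -/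
noncomputable def Eset (K : Set ℝ) : Set (Fin 5 → ℝ) :=
  {x | 0 ≤ x 1 ∧ 0 ≤ x 3 ∧ ∃ t ∈ K, (x 4 - t) ^ 2 ≤ 2 * (x 1) ^ 3 * x 3}

/-!
Property (i) holds for every `K`: right translation by `exp(aX₁)` does not change `x₂, x₄, x₅`,
and right translation by `exp(sX₂)` maps the cone `𝒞` into itself by a two-term Cauchy–Schwarz
inequality. For `p₄ > 0` the slice function vanishes on `K` and at distance `δ` from `K` it is at
least `(δ² / 2p₄)^{1/3}`. Take for `K` the interval `[0,1]` with the middle thirds of the intervals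
`[qₙ, qₙ₊₁]` removed, `qₙ = 1 - (n+1)^{-1/2}`: the removed lengths `≍ n^{-3/2}` are summable, so
`K` has positive measure, while the oscillations `≍ 1/n` of the slice function between the left
end and the midpoint of the `n`-th gap are not, so its variation on `[0,1]` is infinite.
-/

theorem sq_add_le_add_mul_add {d e P Q X Y : ℝ} (hP : 0 ≤ P) (hQ : 0 ≤ Q) (hX : 0 ≤ X)
    (hY : 0 ≤ Y) (hd : d ^ 2 ≤ P * X) (he : e ^ 2 ≤ Q * Y) :
    (d + e) ^ 2 ≤ (P + Q) * (X + Y) := by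
  have hde : 2 * (d * e) ≤ P * Y + Q * X := by
    have hsq : (2 * (d * e)) ^ 2 ≤ (P * Y + Q * X) ^ 2 := by
      have := mul_le_mul hd he (sq_nonneg e) (by positivity)
      nlinarith [sq_nonneg (P * Y - Q * X)]
    exact (le_abs_self _).trans (abs_le_of_sq_le_sq hsq (by positivity))
  linarith

theorem cone_condition_mul_X2 {x1 x3 s a d : ℝ} (hx1 : 0 ≤ x1) (hx3 : 0 ≤ x3) (hs : 0 ≤ s)
    (hd : d ^ 2 ≤ 2 * x1 ^ 3 * x3) :
    (d + a * x1 * s + a * s ^ 2 / 2) ^ 2 ≤ 2 * (x1 + s) ^ 3 * (x3 + a ^ 2 * s / 2) := by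
  have hQ : 0 ≤ (x1 + s) ^ 3 - x1 ^ 3 := sub_nonneg.2 (pow_le_pow_left₀ hx1 (by linarith) 3)
  have he : (a * (x1 * s + s ^ 2 / 2)) ^ 2 ≤ ((x1 + s) ^ 3 - x1 ^ 3) * (a ^ 2 * s) := by
    have : (x1 * s + s ^ 2 / 2) ^ 2 ≤ ((x1 + s) ^ 3 - x1 ^ 3) * s := by
      nlinarith [mul_nonneg (mul_nonneg hx1 hx1) (mul_nonneg hs hs),
        mul_nonneg hx1 (pow_nonneg hs 3), pow_nonneg hs 4]
    nlinarith [mul_le_mul_of_nonneg_left this (sq_nonneg a)]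
  calc (d + a * x1 * s + a * s ^ 2 / 2) ^ 2 = (d + a * (x1 * s + s ^ 2 / 2)) ^ 2 := by ring
    _ ≤ (x1 ^ 3 + ((x1 + s) ^ 3 - x1 ^ 3)) * (2 * x3 + a ^ 2 * s) :=
      sq_add_le_add_mul_add (pow_nonneg hx1 3) hQ (by positivity) (by positivity)
        (by linarith) he
    _ = 2 * (x1 + s) ^ 3 * (x3 + a ^ 2 * s / 2) := by ring

theorem F23mul_X1_mem_Eset {K : Set ℝ} {x : Fin 5 → ℝ} (hx : x ∈ Eset K) (a : ℝ) :
    F23mul x ![a, 0, 0, 0, 0] ∈ Eset K := by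
  simpa [Eset, F23mul] using hx

theorem F23mul_X2_mem_Eset {K : Set ℝ} {x : Fin 5 → ℝ} (hx : x ∈ Eset K) {s : ℝ}
    (hs : 0 ≤ s) : F23mul x ![0, s, 0, 0, 0] ∈ Eset K := by
  obtain ⟨hx1, hx3, t, ht, hxt⟩ := hx
  refine ⟨?_, ?_, t, ht, ?_⟩ <;>
    simp only [F23mul, Matrix.cons_val, mul_zero, add_zero, sub_zero]
  · positivity
  · positivity
  · have := cone_condition_mul_X2 (a := x 0) hx1 hx3 hs hxt
    linarith

namespace Eset

def slice (K : Set ℝ) (p1 p3 p4 x5 : ℝ) : Set ℝ := {x2 | ![p1, x2, p3, p4, x5] ∈ Eset K}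

variable {K : Set ℝ} {p1 p3 p4 x5 x2 : ℝ}

theorem mem_slice_iff :
    x2 ∈ slice K p1 p3 p4 x5 ↔ 0 ≤ x2 ∧ 0 ≤ p4 ∧ ∃ t ∈ K, (x5 - t) ^ 2 ≤ 2 * x2 ^ 3 * p4 :=
  Iff.rfl

theorem slice_nonempty (hp4 : 0 < p4) (hK : K.Nonempty) : (slice K p1 p3 p4 x5).Nonempty := by
  obtain ⟨t, ht⟩ := hK
  set y := 1 + (x5 - t) ^ 2 / (2 * p4)
  have hy : 1 ≤ y := le_add_of_nonneg_right (by positivity)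
  have hy3 : y ≤ y ^ 3 := le_self_pow₀ hy (by norm_num)
  refine ⟨y, mem_slice_iff.2 ⟨by linarith, hp4.le, t, ht, ?_⟩⟩
  have : (x5 - t) ^ 2 = 2 * ((x5 - t) ^ 2 / (2 * p4)) * p4 := by field_simp
  rw [this]
  gcongr
  linarith

theorem sInf_slice_of_mem (hp4 : 0 ≤ p4) (hx5 : x5 ∈ K) : sInf (slice K p1 p3 p4 x5) = 0 :=
  le_antisymm (csInf_le ⟨0, fun _ hy => hy.1⟩ ⟨le_rfl, hp4, x5, hx5, by simp⟩)
    (le_csInf ⟨0, le_rfl, hp4, x5, hx5, by simp⟩ fun _ hy => hy.1)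

theorem le_sInf_slice {c : ℝ} (hp4 : 0 < p4) (hK : K.Nonempty) (hc : 0 ≤ c)
    (hcK : 2 * c ^ 3 * p4 ≤ Metric.infDist x5 K ^ 2) : c ≤ sInf (slice K p1 p3 p4 x5) := by
  refine le_csInf (slice_nonempty hp4 hK) fun y hy => ?_
  obtain ⟨hy, -, t, ht, hyt⟩ := mem_slice_iff.1 hy
  have hdist : Metric.infDist x5 K ^ 2 ≤ (x5 - t) ^ 2 := by
    rw [← sq_abs (x5 - t), ← Real.dist_eq]
    exact pow_le_pow_left₀ Metric.infDist_nonneg (Metric.infDist_le_dist_of_mem ht) 2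
  have : c ^ 3 ≤ y ^ 3 := le_of_mul_le_mul_right (by linarith) (by positivity : 0 < 2 * p4)
  exact (pow_le_pow_iff_left₀ hc hy (by norm_num)).1 this

end Eset

section FatCantor

variable (q : ℕ → ℝ)

noncomputable def gapLeft (n : ℕ) : ℝ := (2 * q n + q (n + 1)) / 3

noncomputable def gapRight (n : ℕ) : ℝ := (q n + 2 * q (n + 1)) / 3

noncomputable def gapMid (n : ℕ) : ℝ := (q n + q (n + 1)) / 2

def fatCantor : Set ℝ := Icc 0 1 \ ⋃ n, Ioo (gapLeft q n) (gapRight q n)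

theorem isCompact_fatCantor : IsCompact (fatCantor q) :=
  isCompact_Icc.of_isClosed_subset (isClosed_Icc.sdiff (isOpen_iUnion fun _ => isOpen_Ioo))
    sdiff_subset

variable {q}

theorem gapLeft_le_gapMid (hq : Monotone q) (n : ℕ) : gapLeft q n ≤ gapMid q n := by
  have := hq n.le_succ; simp only [gapLeft, gapMid]; linarith

theorem gapMid_le_gapLeft_succ (hq : Monotone q) (n : ℕ) : gapMid q n ≤ gapLeft q (n + 1) := by
  have := hq n.le_succ; have := hq (n + 1).le_succ; simp only [gapLeft, gapMid]; linarith

theorem dist_gapMid_ge {t : ℝ} (ht : t ∈ fatCantor q) (n : ℕ) :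
    (q (n + 1) - q n) / 6 ≤ dist (gapMid q n) t := by
  have ht' : t ∉ Ioo (gapLeft q n) (gapRight q n) := fun h => ht.2 (mem_iUnion.2 ⟨n, h⟩)
  rw [mem_Ioo, not_and_or, not_lt, not_lt] at ht'
  rw [Real.dist_eq]
  rcases ht' with h | h
  · exact (le_abs_self _).trans' (by simp only [gapLeft, gapMid] at *; linarith)
  · exact (neg_le_abs _).trans' (by simp only [gapRight, gapMid] at *; linarith)

theorem gapLeft_mem_Icc (hq01 : ∀ n, q n ∈ Icc 0 1) (n : ℕ) : gapLeft q n ∈ Icc (0 : ℝ) 1 := by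
  have := hq01 n; have := hq01 (n + 1)
  constructor <;> simp only [gapLeft, mem_Icc] at * <;> linarith

theorem gapMid_mem_Icc (hq01 : ∀ n, q n ∈ Icc 0 1) (n : ℕ) : gapMid q n ∈ Icc (0 : ℝ) 1 := by
  have := hq01 n; have := hq01 (n + 1)
  constructor <;> simp only [gapMid, mem_Icc] at * <;> linarith

theorem gapLeft_mem_fatCantor (hq : Monotone q) (hq01 : ∀ n, q n ∈ Icc 0 1) (n : ℕ) :
    gapLeft q n ∈ fatCantor q := by
  refine ⟨gapLeft_mem_Icc hq01 n, ?_⟩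
  simp only [mem_iUnion, mem_Ioo, not_exists, not_and_or, not_lt]
  intro m
  have hstep (k : ℕ) : q k ≤ q (k + 1) := hq k.le_succ
  rcases lt_trichotomy m n with hmn | rfl | hnm
  · have := hq (show m + 1 ≤ n from hmn)
    right; simp only [gapLeft, gapRight]; linarith [hstep m, hstep n]
  · exact Or.inl le_rfl
  · have := hq (show n + 1 ≤ m from hnm)
    left; simp only [gapLeft]; linarith [hstep m, hstep n]

theorem volume_fatCantor_pos (hq : Monotone q) (hq01 : ∀ n, q n ∈ Icc 0 1) :
    0 < volume (fatCantor q) := by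
  have hgaps : volume (⋃ n, Ioo (gapLeft q n) (gapRight q n)) ≤ ENNReal.ofReal (1 / 3) := by
    refine (measure_iUnion_le _).trans (ENNReal.tsum_le_of_sum_range_le fun N => ?_)
    have hlen : ∀ n, gapRight q n - gapLeft q n = (q (n + 1) - q n) / 3 := fun n => by
      simp only [gapLeft, gapRight]; ring
    simp only [Real.volume_Ioo, hlen]
    rw [← ENNReal.ofReal_sum_of_nonneg fun n _ => by linarith [hq n.le_succ], ← Finset.sum_div,
      Finset.sum_range_sub (fun n => q n)]
    exact ENNReal.ofReal_le_ofReal (by linarith [(hq01 N).2, (hq01 0).1])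
  calc (0 : ENNReal) < 1 - ENNReal.ofReal (1 / 3) := by
        rw [tsub_pos_iff_lt, ENNReal.ofReal_lt_one]; norm_num
    _ ≤ volume (Icc (0 : ℝ) 1) - volume (⋃ n, Ioo (gapLeft q n) (gapRight q n)) := by
        rw [Real.volume_Icc, sub_zero, ENNReal.ofReal_one]; gcongr
    _ ≤ volume (fatCantor q) := le_measure_sdiff

end FatCantor

noncomputable def invSqrtNodes (n : ℕ) : ℝ := 1 - 1 / √(n + 1)

theorem monotone_invSqrtNodes : Monotone invSqrtNodes := by
  refine monotone_nat_of_le_succ fun n => ?_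
  unfold invSqrtNodes
  gcongr
  linarith

theorem invSqrtNodes_mem_Icc (n : ℕ) : invSqrtNodes n ∈ Icc 0 1 := by
  have h1 : 1 ≤ √((n : ℝ) + 1) := Real.one_le_sqrt.2 (by linarith [n.cast_nonneg (α := ℝ)])
  have h2 : 1 / √((n : ℝ) + 1) ≤ 1 := (div_le_one (by linarith)).2 h1
  have h3 : 0 ≤ 1 / √((n : ℝ) + 1) := by positivity
  constructor <;> unfold invSqrtNodes <;> linarith

theorem sq_invSqrtNodes_gap_ge (n : ℕ) :
    1 / (4 * ((n : ℝ) + 2) ^ 3) ≤ (invSqrtNodes (n + 1) - invSqrtNodes n) ^ 2 := by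
  set a := √((n : ℝ) + 1)
  set b := √((n : ℝ) + 2)
  have ha : 0 < a := by positivity
  have hb : 0 < b := by positivity
  have ha2 : a ^ 2 = n + 1 := Real.sq_sqrt (by positivity)
  have hb2 : b ^ 2 = n + 2 := Real.sq_sqrt (by positivity)
  have hab : a ≤ b := Real.sqrt_le_sqrt (by linarith)
  have hgap : invSqrtNodes (n + 1) - invSqrtNodes n = 1 / a - 1 / b := by
    simp only [invSqrtNodes, a, b]; push_cast; ring_nf
  -- `1/a - 1/b = 1 / (a b (a + b))` because `b² - a² = 1`
  have hlow : 1 / (2 * b ^ 3) ≤ 1 / a - 1 / b := by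
    rw [div_sub_div _ _ ha.ne' hb.ne', div_le_div_iff₀ (by positivity) (by positivity)]
    nlinarith [mul_le_mul_of_nonneg_left hab (mul_nonneg hb.le hb.le)]
  calc 1 / (4 * ((n : ℝ) + 2) ^ 3) = (1 / (2 * b ^ 3)) ^ 2 := by rw [← hb2]; ring
    _ ≤ _ := by rw [hgap]; exact pow_le_pow_left₀ (by positivity) hlow 2

theorem tsum_edist_le_eVariationOn {α E : Type*} [LinearOrder α] [PseudoEMetricSpace E]
    {f : α → E} {s : Set α} {a b : ℕ → α} (hab : ∀ n, a n ≤ b n) (hba : ∀ n, b n ≤ a (n + 1))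
    (ha : ∀ n, a n ∈ s) (hb : ∀ n, b n ∈ s) :
    ∑' n, edist (f (b n)) (f (a n)) ≤ eVariationOn f s := by
  let u : ℕ → α := fun i => if i % 2 = 0 then a (i / 2) else b (i / 2)
  have hu_even (k : ℕ) : u (2 * k) = a k := by simp [u]
  have hu_odd (k : ℕ) : u (2 * k + 1) = b k := by simp [u, Nat.add_mod, Nat.add_div]
  have hu : Monotone u := by
    refine monotone_nat_of_le_succ fun i => ?_
    obtain ⟨k, rfl | rfl⟩ := Nat.even_or_odd' i
    · rw [hu_odd, hu_even]; exact hab k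
    · rw [hu_odd, show 2 * k + 1 + 1 = 2 * (k + 1) by ring, hu_even]; exact hba k
  have hus (i : ℕ) : u i ∈ s := by
    obtain ⟨k, rfl | rfl⟩ := Nat.even_or_odd' i
    · rw [hu_even]; exact ha k
    · rw [hu_odd]; exact hb k
  refine ENNReal.tsum_le_of_sum_range_le fun N => ?_
  refine le_trans ?_ (eVariationOn.sum_le (n := 2 * N) hu hus)
  induction N with
  | zero => simp
  | succ N ih =>
    rw [Finset.sum_range_succ, show 2 * (N + 1) = 2 * N + 1 + 1 by ring,
      Finset.sum_range_succ, Finset.sum_range_succ, hu_odd, hu_even, add_assoc]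
    exact add_le_add ih le_self_add

theorem tsum_ofReal_eq_top_of_not_summable {ι : Type*} {g : ι → ℝ} (hg : ∀ i, 0 ≤ g i)
    (h : ¬Summable g) : ∑' i, ENNReal.ofReal (g i) = ⊤ := by
  by_contra hne
  exact h (by simpa only [ENNReal.toReal_ofReal (hg _)] using ENNReal.summable_toReal hne)

theorem not_summable_div_add_two {c : ℝ} (hc : c ≠ 0) : ¬Summable fun n : ℕ => c / (n + 2) := by
  intro h
  have : Summable fun n : ℕ => 1 / ((n + 2 : ℕ) : ℝ) := by
    refine (h.mul_left c⁻¹).congr fun n => ?_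
    push_cast
    field_simp
  exact Real.not_summable_one_div_natCast ((summable_nat_add_iff 2).1 this)

theorem div_add_two_le_sInf_slice_gapMid (p1 p3 : ℝ) {p4 c : ℝ} (hp4 : 0 < p4) (hc : 0 ≤ c)
    (hc3 : 288 * c ^ 3 * p4 ≤ 1) (n : ℕ) :
    c / (n + 2) ≤ sInf (Eset.slice (fatCantor invSqrtNodes) p1 p3 p4 (gapMid invSqrtNodes n)) := by
  set K := fatCantor invSqrtNodes
  set gap := invSqrtNodes (n + 1) - invSqrtNodes n
  have hK : K.Nonempty := ⟨_, gapLeft_mem_fatCantor monotone_invSqrtNodes invSqrtNodes_mem_Icc 0⟩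
  refine Eset.le_sInf_slice hp4 hK (by positivity) ?_
  have hdist : gap / 6 ≤ Metric.infDist (gapMid invSqrtNodes n) K :=
    (Metric.le_infDist hK).2 fun t ht => dist_gapMid_ge ht n
  have hgap : 0 ≤ gap / 6 := by linarith [monotone_invSqrtNodes n.le_succ]
  calc 2 * (c / (n + 2)) ^ 3 * p4
      = 288 * c ^ 3 * p4 * (1 / (4 * ((n : ℝ) + 2) ^ 3) / 6 ^ 2) := by field_simp; ring
    _ ≤ 1 * (gap ^ 2 / 6 ^ 2) := by gcongr; exact sq_invSqrtNodes_gap_ge n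
    _ = (gap / 6) ^ 2 := by ring
    _ ≤ Metric.infDist (gapMid invSqrtNodes n) K ^ 2 := pow_le_pow_left₀ hgap hdist 2

theorem eVariationOn_sInf_slice_fatCantor_eq_top (p1 p3 : ℝ) {p4 : ℝ} (hp4 : 0 < p4) :
    eVariationOn (fun x5 => sInf (Eset.slice (fatCantor invSqrtNodes) p1 p3 p4 x5))
      (univ ∩ Icc 0 1) = ⊤ := by
  have hq := monotone_invSqrtNodes
  set c := min 1 (1 / (288 * p4))
  have hc : 0 < c := lt_min one_pos (by positivity)
  have hc3 : 288 * c ^ 3 * p4 ≤ 1 := by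
    have : c ^ 3 ≤ 1 / (288 * p4) :=
      (pow_le_of_le_one hc.le (min_le_left _ _) (by norm_num)).trans (min_le_right _ _)
    linarith [(le_div_iff₀ (by positivity)).1 this]
  refine top_unique (le_trans ?_ (tsum_edist_le_eVariationOn (gapLeft_le_gapMid hq)
    (gapMid_le_gapLeft_succ hq) (fun n => ⟨trivial, gapLeft_mem_Icc invSqrtNodes_mem_Icc n⟩)
    (fun n => ⟨trivial, gapMid_mem_Icc invSqrtNodes_mem_Icc n⟩)))
  rw [← tsum_ofReal_eq_top_of_not_summable (fun n => by positivity)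
    (not_summable_div_add_two hc.ne')]
  refine ENNReal.tsum_le_tsum fun n => ?_
  rw [edist_dist, Real.dist_eq, Eset.sInf_slice_of_mem hp4.le
    (gapLeft_mem_fatCantor hq invSqrtNodes_mem_Icc n), sub_zero]
  exact ENNReal.ofReal_le_ofReal
    ((div_add_two_le_sInf_slice_gapMid p1 p3 hp4 hc.le hc3 n).trans (le_abs_self _))

/-- There is a compact set `K ⊆ [0,1]` of positive Lebesgue measure such that the set
`E = ⋃_{t ∈ K} exp(tX₅)·𝒞 ⊆ 𝔽₂₃` is `X₁`-invariant and forward `X₂`-monotone (hence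
has constant horizontal normal `X₂`), yet for all `p₁, p₃ ∈ ℝ` and `p₄ > 0` the slice
function `x₅ ↦ inf {x₂ : (p₁,x₂,p₃,p₄,x₅) ∈ E}` fails to have locally bounded
variation (so `E` is not a Euclidean Caccioppoli set). -/
theorem exists_constant_normal_set_not_Caccioppoli :
    ∃ K : Set ℝ, IsCompact K ∧ K ⊆ Icc 0 1 ∧ 0 < volume K ∧
      (∀ x ∈ Eset K, ∀ a : ℝ, F23mul x ![a, 0, 0, 0, 0] ∈ Eset K) ∧
      (∀ x ∈ Eset K, ∀ s : ℝ, 0 ≤ s → F23mul x ![0, s, 0, 0, 0] ∈ Eset K) ∧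
      (∀ p1 p3 p4 : ℝ, 0 < p4 →
        ¬ LocallyBoundedVariationOn
          (fun x5 : ℝ => sInf {x2 : ℝ | (![p1, x2, p3, p4, x5] : Fin 5 → ℝ) ∈ Eset K})
          univ) := by
  refine ⟨fatCantor invSqrtNodes, isCompact_fatCantor _, sdiff_subset,
    volume_fatCantor_pos monotone_invSqrtNodes invSqrtNodes_mem_Icc,
    fun x hx a => F23mul_X1_mem_Eset hx a, fun x hx s hs => F23mul_X2_mem_Eset hx hs, ?_⟩
  intro p1 p3 p4 hp4 hbv
  exact hbv 0 1 trivial trivial (eVariationOn_sInf_slice_fatCantor_eq_top p1 p3 hp4)
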